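/- arXiv:q-alg/9611026 — 2 statements merged into one kernel-verified Lean document; each statement's English description precedes it below -/
import Mathlib

section
/- Let R be a biinvertible n²×n² complex R-matrix with associated matrices U and V, and suppose there exists a nonzero complex number α such that VU = α²I. Then (αPR, α⁻¹U) and (αRP, α⁻¹V) are enhanced R-matrices in the sense of Definition 2. -/
open scoped BigOperators

namespace Enhance

noncomputable section

/-- n×n complex matrices. -/
abbrev Mat1 (n : ℕ) := Matrix (Fin n) (Fin n) ℂ

/-- n²×n² complex matrices, indexed by pairs. -/
abbrev Mat2 (n : ℕ) := Matrix (Fin n × Fin n) (Fin n × Fin n) ℂ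

/-- n³×n³ complex matrices, indexed by triples. -/
abbrev Mat3 (n : ℕ) := Matrix (Fin n × Fin n × Fin n) (Fin n × Fin n × Fin n) ℂ

/-- Kronecker product of two n×n matrices: (μ⊗ν)^{ab}_{cd} = μ^a_c ν^b_d. -/
def kron {n : ℕ} (μ ν : Mat1 n) : Mat2 n :=
  Matrix.of fun p q => μ p.1 q.1 * ν p.2 q.2

/-- The permutation matrix P^{ab}_{cd} = δ^a_d δ^b_c. -/
def Pmat (n : ℕ) : Mat2 n :=
  Matrix.of fun p q => if p.1 = q.2 ∧ p.2 = q.1 then 1 else 0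

/-- A₁₂ = A ⊗ I. -/
def A12 {n : ℕ} (A : Mat2 n) : Mat3 n :=
  Matrix.of fun p q => A (p.1, p.2.1) (q.1, q.2.1) * (if p.2.2 = q.2.2 then 1 else 0)

/-- A₂₃ = I ⊗ A. -/
def A23 {n : ℕ} (A : Mat2 n) : Mat3 n :=
  Matrix.of fun p q => (if p.1 = q.1 then 1 else 0) * A (p.2.1, p.2.2) (q.2.1, q.2.2)

/-- (A₁₃)^{abc}_{def} = A^{ac}_{df} δ^b_e. -/
def A13 {n : ℕ} (A : Mat2 n) : Mat3 n :=
  Matrix.of fun p q => A (p.1, p.2.2) (q.1, q.2.2) * (if p.2.1 = q.2.1 then 1 else 0)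

/-- First partial transpose: (A^{t₁})^{ab}_{cd} = A^{cb}_{ad}. -/
def t1 {n : ℕ} (A : Mat2 n) : Mat2 n :=
  Matrix.of fun p q => A (q.1, p.2) (p.1, q.2)

/-- Second partial transpose: (A^{t₂})^{ab}_{cd} = A^{ad}_{cb}. -/
def t2 {n : ℕ} (A : Mat2 n) : Mat2 n :=
  Matrix.of fun p q => A (p.1, q.2) (q.1, p.2)

/-- Second partial trace: Tr₂(A)^a_c = Σ_d A^{ad}_{cd}. -/
def Tr2 {n : ℕ} (A : Mat2 n) : Mat1 n :=
  Matrix.of fun a c => ∑ d, A (a, d) (c, d)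

/-- The quantum Yang–Baxter equation R₁₂R₁₃R₂₃ = R₂₃R₁₃R₁₂. -/
def QYB {n : ℕ} (R : Mat2 n) : Prop :=
  A12 R * A13 R * A23 R = A23 R * A13 R * A12 R

/-- The braid equation S₁₂S₂₃S₁₂ = S₂₃S₁₂S₂₃. -/
def Braid {n : ℕ} (S : Mat2 n) : Prop :=
  A12 S * A23 S * A12 S = A23 S * A12 S * A23 S

/-- R is biinvertible if both R and R^{t₂} are invertible. -/
def Biinv {n : ℕ} (R : Mat2 n) : Prop :=
  IsUnit R ∧ IsUnit (t2 R)

/-- R̃ = ((R^{t₂})⁻¹)^{t₂}. -/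
noncomputable def Rtil {n : ℕ} (R : Mat2 n) : Mat2 n := t2 (t2 R)⁻¹

/-- U^i_j = Σ_a R̃^{ai}_{ja}. -/
noncomputable def Umat {n : ℕ} (R : Mat2 n) : Mat1 n :=
  Matrix.of fun i j => ∑ a, Rtil R (a, i) (j, a)

/-- V^i_j = Σ_a R̃^{ia}_{aj}. -/
noncomputable def Vmat {n : ℕ} (R : Mat2 n) : Mat1 n :=
  Matrix.of fun i j => ∑ a, Rtil R (i, a) (a, j)

/-- Enhanced R-matrix in the sense of Definition 2 (Turaev, tangle category version). -/
def IsEnhanced2 {n : ℕ} (S : Mat2 n) (μ : Mat1 n) : Prop :=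
  IsUnit S ∧ IsUnit μ ∧ Braid S ∧
  S * kron μ μ = kron μ μ * S ∧
  Tr2 (S * kron 1 μ) = 1 ∧ Tr2 (S⁻¹ * kron 1 μ) = 1 ∧
  t1 (Pmat n * S⁻¹) * kron 1 μ * t1 (S * Pmat n) * kron 1 μ⁻¹ = 1 ∧
  t1 (Pmat n * S) * kron 1 μ * t1 (S⁻¹ * Pmat n) * kron 1 μ⁻¹ = 1

/-- Enhanced R-matrix in the sense of Definition 1 (Turaev, link invariant version). -/
def IsEnhanced1 {n : ℕ} (S : Mat2 n) (μ : Mat1 n) (α β : ℂ) : Prop :=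
  IsUnit S ∧ α ≠ 0 ∧ β ≠ 0 ∧ Braid S ∧
  S * kron μ μ = kron μ μ * S ∧
  Tr2 (S * kron μ μ) = (α * β) • μ ∧
  Tr2 (S⁻¹ * kron μ μ) = (α⁻¹ * β) • μ



variable {n : ℕ}

open Matrix

/-! ### basic entrywise lemmas -/

lemma Pmat_mul_apply (M : Mat2 n) (p q : Fin n × Fin n) :
    (Pmat n * M) p q = M (p.2, p.1) q := by
  rw [Matrix.mul_apply, Fintype.sum_prod_type]
  simp [Pmat, ite_and, Finset.sum_ite_eq, Finset.sum_ite_eq']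

lemma mul_Pmat_apply (M : Mat2 n) (p q : Fin n × Fin n) :
    (M * Pmat n) p q = M p (q.2, q.1) := by
  rw [Matrix.mul_apply, Fintype.sum_prod_type]
  simp [Pmat, ite_and, Finset.sum_ite_eq, Finset.sum_ite_eq']

lemma Pmat_mul_Pmat : Pmat n * Pmat n = 1 := by
  ext p q
  rw [Pmat_mul_apply]
  simp [Pmat, Matrix.one_apply, Prod.ext_iff, and_comm]

lemma kron_mul_apply (a b : Mat1 n) (M : Mat2 n) (p q : Fin n × Fin n) :
    (kron a b * M) p q = ∑ x, ∑ y, a p.1 x * b p.2 y * M (x, y) q := by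
  rw [Matrix.mul_apply, Fintype.sum_prod_type]
  simp [kron]

lemma mul_kron_apply (a b : Mat1 n) (M : Mat2 n) (p q : Fin n × Fin n) :
    (M * kron a b) p q = ∑ x, ∑ y, M p (x, y) * (a x q.1 * b y q.2) := by
  rw [Matrix.mul_apply, Fintype.sum_prod_type]
  simp [kron]

lemma kron_mul_kron (a b c d : Mat1 n) :
    kron a b * kron c d = kron (a * c) (b * d) := by
  ext p q
  rw [kron_mul_apply]
  simp only [kron, Matrix.of_apply, Matrix.mul_apply]
  rw [Finset.sum_mul_sum]
  apply Finset.sum_congr rfl; intro x _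
  apply Finset.sum_congr rfl; intro y _
  ring

lemma kron_one_one : (kron 1 1 : Mat2 n) = 1 := by
  ext p q
  simp [kron, Matrix.one_apply, Prod.ext_iff]
  split <;> split <;> simp_all

/-! ### t1 / t2 / flip lemmas -/

lemma t2_t2 (M : Mat2 n) : t2 (t2 M) = M := rfl

lemma t1_t1 (M : Mat2 n) : t1 (t1 M) = M := rfl

lemma t1_eq_transpose_t2 (M : Mat2 n) : t1 M = (t2 M)ᵀ := rfl

lemma t2_smul (c : ℂ) (M : Mat2 n) : t2 (c • M) = c • t2 M := rfl

lemma t1_smul (c : ℂ) (M : Mat2 n) : t1 (c • M) = c • t1 M := rfl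

/-- `flip M = P M P` entrywise. -/
lemma flip_apply (M : Mat2 n) (p q : Fin n × Fin n) :
    (Pmat n * M * Pmat n) p q = M (p.2, p.1) (q.2, q.1) := by
  rw [mul_Pmat_apply, Pmat_mul_apply]

lemma flip_flip (M : Mat2 n) : Pmat n * (Pmat n * M * Pmat n) * Pmat n = M := by
  ext ⟨p1, p2⟩ ⟨q1, q2⟩
  rw [flip_apply, flip_apply]

lemma flip_mul (M N : Mat2 n) :
    Pmat n * (M * N) * Pmat n = (Pmat n * M * Pmat n) * (Pmat n * N * Pmat n) := by
  have : (Pmat n * M * Pmat n) * (Pmat n * N * Pmat n)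
      = Pmat n * M * (Pmat n * Pmat n) * (N * Pmat n) := by
    noncomm_ring
  rw [this, Pmat_mul_Pmat]
  noncomm_ring

lemma flip_kron (a b : Mat1 n) : Pmat n * kron a b * Pmat n = kron b a := by
  ext p q
  rw [flip_apply]
  simp [kron, mul_comm]

lemma t2_flip (M : Mat2 n) : t2 (Pmat n * M * Pmat n) = Pmat n * t1 M * Pmat n := by
  ext p q
  rw [flip_apply]
  simp only [t2, t1, Matrix.of_apply]
  rw [flip_apply]

lemma t1_flip (M : Mat2 n) : t1 (Pmat n * M * Pmat n) = Pmat n * t2 M * Pmat n := by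
  ext p q
  rw [flip_apply]
  simp only [t2, t1, Matrix.of_apply]
  rw [flip_apply]

lemma kron_one_mul_Pmat (a : Mat1 n) : kron a 1 * Pmat n = Pmat n * kron 1 a := by
  ext p q
  rw [mul_Pmat_apply, Pmat_mul_apply]
  simp [kron, mul_comm]

lemma kron_one_mul_Pmat' (a : Mat1 n) : kron 1 a * Pmat n = Pmat n * kron a 1 := by
  ext p q
  rw [mul_Pmat_apply, Pmat_mul_apply]
  simp [kron, mul_comm]

lemma Pmat_mul_kron_same (a : Mat1 n) : Pmat n * kron a a = kron a a * Pmat n := by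
  ext p q
  rw [mul_Pmat_apply, Pmat_mul_apply]
  simp [kron, mul_comm]

/-! ### t1/t2 pass-through lemmas -/

lemma t2_kron_one_mul (m : Mat1 n) (X : Mat2 n) :
    t2 (kron m 1 * X) = kron m 1 * t2 X := by
  ext p q
  simp only [t2, Matrix.of_apply]
  rw [kron_mul_apply, kron_mul_apply]
  simp [t2, Matrix.one_apply]

lemma t2_mul_kron_one (m : Mat1 n) (X : Mat2 n) :
    t2 (X * kron m 1) = t2 X * kron m 1 := by
  ext p q
  simp only [t2, Matrix.of_apply]
  rw [mul_kron_apply, mul_kron_apply]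
  simp [t2, Matrix.one_apply, mul_comm, mul_assoc, mul_left_comm]

lemma t1_kron_one_mul (m : Mat1 n) (X : Mat2 n) :
    t1 (kron 1 m * X) = kron 1 m * t1 X := by
  ext p q
  simp only [t1, Matrix.of_apply]
  rw [kron_mul_apply, kron_mul_apply]
  simp [t1, Matrix.one_apply]

lemma t1_mul_kron_one (m : Mat1 n) (X : Mat2 n) :
    t1 (X * kron 1 m) = t1 X * kron 1 m := by
  ext p q
  simp only [t1, Matrix.of_apply]
  rw [mul_kron_apply, mul_kron_apply]
  simp [t1, Matrix.one_apply, mul_comm, mul_assoc, mul_left_comm]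

/-! ### Tr2 lemmas -/

lemma Tr2_smul (c : ℂ) (X : Mat2 n) : Tr2 (c • X) = c • Tr2 X := by
  ext a c'
  simp [Tr2, Finset.mul_sum]

lemma Tr2_kron_one_mul (m : Mat1 n) (X : Mat2 n) :
    Tr2 (kron m 1 * X) = m * Tr2 X := by
  ext a c
  have h1 : ∀ d, (kron m 1 * X) (a, d) (c, d) = ∑ x, m a x * X (x, d) (c, d) := by
    intro d
    rw [kron_mul_apply]
    simp [Matrix.one_apply]
  show ∑ d, (kron m 1 * X) (a, d) (c, d) = ∑ x, m a x * Tr2 X x c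
  simp only [h1, Tr2, Matrix.of_apply]
  rw [Finset.sum_comm]
  apply Finset.sum_congr rfl; intro x _
  rw [Finset.mul_sum]

lemma Tr2_mul_Pmat (X : Mat2 n) :
    Tr2 (X * Pmat n) = Matrix.of fun a c => ∑ d, X (a, d) (d, c) := by
  ext a c
  simp only [Tr2, Matrix.of_apply]
  apply Finset.sum_congr rfl; intro d _
  rw [mul_Pmat_apply]

/-! ### A12 / A13 / A23 algebra -/

lemma A12_mul (X Y : Mat2 n) : A12 (X * Y) = A12 X * A12 Y := by
  ext p q
  simp only [Matrix.mul_apply, Fintype.sum_prod_type, A12, Matrix.of_apply,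
    mul_ite, ite_mul, one_mul, mul_one, zero_mul, mul_zero, Finset.sum_ite_eq,
    Finset.sum_ite_eq', Finset.mem_univ, if_true, Finset.sum_mul, Finset.mul_sum,
    Finset.sum_ite_irrel, Finset.sum_const_zero]

lemma A23_mul (X Y : Mat2 n) : A23 (X * Y) = A23 X * A23 Y := by
  ext p q
  simp only [Matrix.mul_apply, Fintype.sum_prod_type, A23, Matrix.of_apply,
    mul_ite, ite_mul, one_mul, mul_one, zero_mul, mul_zero, Finset.sum_ite_eq,
    Finset.sum_ite_eq', Finset.mem_univ, if_true, Finset.sum_mul, Finset.mul_sum,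
    Finset.sum_ite_irrel, Finset.sum_const_zero]

lemma A13_mul (X Y : Mat2 n) : A13 (X * Y) = A13 X * A13 Y := by
  ext p q
  simp only [Matrix.mul_apply, Fintype.sum_prod_type, A13, Matrix.of_apply,
    mul_ite, ite_mul, one_mul, mul_one, zero_mul, mul_zero, Finset.sum_ite_eq,
    Finset.sum_ite_eq', Finset.mem_univ, if_true, Finset.sum_mul, Finset.mul_sum,
    Finset.sum_ite_irrel, Finset.sum_const_zero]

lemma A12_one : A12 (1 : Mat2 n) = 1 := by
  ext p q
  simp only [A12, Matrix.of_apply, Matrix.one_apply, Prod.ext_iff]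
  by_cases h1 : p.1 = q.1 <;> by_cases h2 : p.2.1 = q.2.1 <;> by_cases h3 : p.2.2 = q.2.2 <;>
    simp [h1, h2, h3]

lemma A23_one : A23 (1 : Mat2 n) = 1 := by
  ext p q
  simp only [A23, Matrix.of_apply, Matrix.one_apply, Prod.ext_iff]
  by_cases h1 : p.1 = q.1 <;> by_cases h2 : p.2.1 = q.2.1 <;> by_cases h3 : p.2.2 = q.2.2 <;>
    simp [h1, h2, h3]

lemma A13_one : A13 (1 : Mat2 n) = 1 := by
  ext p q
  simp only [A13, Matrix.of_apply, Matrix.one_apply, Prod.ext_iff]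
  by_cases h1 : p.1 = q.1 <;> by_cases h2 : p.2.1 = q.2.1 <;> by_cases h3 : p.2.2 = q.2.2 <;>
    simp [h1, h2, h3]

lemma A12_smul (c : ℂ) (X : Mat2 n) : A12 (c • X) = c • A12 X := by
  ext p q
  simp [A12, mul_assoc]

lemma A23_smul (c : ℂ) (X : Mat2 n) : A23 (c • X) = c • A23 X := by
  ext p q
  simp only [A23, Matrix.of_apply, Matrix.smul_apply, smul_eq_mul]
  ring

/-! ### triple product entry formulas -/

lemma mul3_121323 (X Y Z : Mat2 n) :
    A12 X * A13 Y * A23 Z = Matrix.of fun p q => ∑ y, ∑ w, ∑ x,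
      X (p.1, p.2.1) (x, y) * Y (x, p.2.2) (q.1, w) * Z (y, w) (q.2.1, q.2.2) := by
  ext p q
  simp only [Matrix.mul_apply, Fintype.sum_prod_type, A12, A13, A23, Matrix.of_apply,
    mul_ite, ite_mul, one_mul, mul_one, zero_mul, mul_zero, Finset.sum_ite_eq,
    Finset.sum_ite_eq', Finset.mem_univ, if_true, Finset.sum_mul, Finset.mul_sum,
    Finset.sum_ite_irrel, Finset.sum_const_zero]

lemma mul3_231312 (X Y Z : Mat2 n) :
    A23 Z * A13 Y * A12 X = Matrix.of fun p q => ∑ u, ∑ y, ∑ z,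
      Z (p.2.1, p.2.2) (y, z) * Y (p.1, z) (u, q.2.2) * X (u, y) (q.1, q.2.1) := by
  ext p q
  simp only [Matrix.mul_apply, Fintype.sum_prod_type, A12, A13, A23, Matrix.of_apply,
    mul_ite, ite_mul, one_mul, mul_one, zero_mul, mul_zero, Finset.sum_ite_eq,
    Finset.sum_ite_eq', Finset.mem_univ, if_true, Finset.sum_mul, Finset.mul_sum,
    Finset.sum_ite_irrel, Finset.sum_const_zero]

/-! ### swap lemmas with A(P) -/

lemma swap_12_23P (X : Mat2 n) : A12 X * A23 (Pmat n) = A23 (Pmat n) * A13 X := by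
  ext p q
  simp only [Matrix.mul_apply, Fintype.sum_prod_type, A12, A13, A23, Pmat, Matrix.of_apply,
    ite_and, mul_ite, ite_mul, one_mul, mul_one, zero_mul, mul_zero, Finset.sum_ite_eq,
    Finset.sum_ite_eq', Finset.mem_univ, if_true, Finset.sum_mul, Finset.mul_sum,
    Finset.sum_ite_irrel, Finset.sum_const_zero]

lemma swap_13_12P (X : Mat2 n) : A13 X * A12 (Pmat n) = A12 (Pmat n) * A23 X := by
  ext p q
  simp only [Matrix.mul_apply, Fintype.sum_prod_type, A12, A13, A23, Pmat, Matrix.of_apply,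
    ite_and, mul_ite, ite_mul, one_mul, mul_one, zero_mul, mul_zero, Finset.sum_ite_eq,
    Finset.sum_ite_eq', Finset.mem_univ, if_true, Finset.sum_mul, Finset.mul_sum,
    Finset.sum_ite_irrel, Finset.sum_const_zero]

lemma swap_23_12P (X : Mat2 n) : A23 X * A12 (Pmat n) = A12 (Pmat n) * A13 X := by
  ext p q
  simp only [Matrix.mul_apply, Fintype.sum_prod_type, A12, A13, A23, Pmat, Matrix.of_apply,
    ite_and, mul_ite, ite_mul, one_mul, mul_one, zero_mul, mul_zero, Finset.sum_ite_eq,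
    Finset.sum_ite_eq', Finset.mem_univ, if_true, Finset.sum_mul, Finset.mul_sum,
    Finset.sum_ite_irrel, Finset.sum_const_zero]

lemma swap_13_23P (X : Mat2 n) : A13 X * A23 (Pmat n) = A23 (Pmat n) * A12 X := by
  ext p q
  simp only [Matrix.mul_apply, Fintype.sum_prod_type, A12, A13, A23, Pmat, Matrix.of_apply,
    ite_and, mul_ite, ite_mul, one_mul, mul_one, zero_mul, mul_zero, Finset.sum_ite_eq,
    Finset.sum_ite_eq', Finset.mem_univ, if_true, Finset.sum_mul, Finset.mul_sum,
    Finset.sum_ite_irrel, Finset.sum_const_zero]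

lemma swap_braidP :
    A12 (Pmat n) * A23 (Pmat n) * A12 (Pmat n) = A23 (Pmat n) * A12 (Pmat n) * A23 (Pmat n) := by
  ext p q
  simp only [Matrix.mul_apply, Fintype.sum_prod_type, A12, A23, Pmat, Matrix.of_apply,
    ite_and, mul_ite, ite_mul, one_mul, mul_one, zero_mul, mul_zero, Finset.sum_ite_eq,
    Finset.sum_ite_eq', Finset.mem_univ, if_true, Finset.sum_mul, Finset.mul_sum,
    Finset.sum_ite_irrel, Finset.sum_const_zero]
  split_ifs <;> rfl

/-- entrywise flip -/
def flipm (X : Mat2 n) : Mat2 n := Matrix.of fun p q => X (p.2, p.1) (q.2, q.1)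

lemma flipm_eq (X : Mat2 n) : Pmat n * X * Pmat n = flipm X := by
  ext p q
  rw [flip_apply]
  rfl

/-! ### Omega: full reversal on triple space -/

def Omega : Mat3 n :=
  Matrix.of fun p q => if p.1 = q.2.2 ∧ p.2.1 = q.2.1 ∧ p.2.2 = q.1 then 1 else 0

lemma Omega_mul_Omega : (Omega : Mat3 n) * Omega = 1 := by
  ext p q
  simp only [Matrix.mul_apply, Fintype.sum_prod_type, Omega, Matrix.of_apply, Matrix.one_apply,
    ite_and, mul_ite, ite_mul, one_mul, mul_one, zero_mul, mul_zero, Finset.sum_ite_eq,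
    Finset.sum_ite_eq', Finset.mem_univ, if_true, Finset.sum_ite_irrel, Finset.sum_const_zero,
    Prod.ext_iff]

lemma Omega_A12 (X : Mat2 n) :
    Omega * A12 X = A23 (flipm X) * Omega := by
  ext p q
  simp only [Matrix.mul_apply, Fintype.sum_prod_type, Omega, A12, A23, flipm, Matrix.of_apply,
    ite_and, mul_ite, ite_mul, one_mul, mul_one, zero_mul, mul_zero,
    Finset.sum_ite_eq, Finset.sum_ite_eq', Finset.mem_univ, if_true,
    Finset.sum_ite_irrel, Finset.sum_const_zero]

lemma Omega_A23 (X : Mat2 n) :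
    Omega * A23 X = A12 (flipm X) * Omega := by
  ext p q
  simp only [Matrix.mul_apply, Fintype.sum_prod_type, Omega, A12, A23, flipm, Matrix.of_apply,
    ite_and, mul_ite, ite_mul, one_mul, mul_one, zero_mul, mul_zero,
    Finset.sum_ite_eq, Finset.sum_ite_eq', Finset.mem_univ, if_true,
    Finset.sum_ite_irrel, Finset.sum_const_zero]

lemma Omega_A13 (X : Mat2 n) :
    Omega * A13 X = A13 (flipm X) * Omega := by
  ext p q
  simp only [Matrix.mul_apply, Fintype.sum_prod_type, Omega, A13, flipm, Matrix.of_apply,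
    ite_and, mul_ite, ite_mul, one_mul, mul_one, zero_mul, mul_zero,
    Finset.sum_ite_eq, Finset.sum_ite_eq', Finset.mem_univ, if_true,
    Finset.sum_ite_irrel, Finset.sum_const_zero]

/-! ### tau : partial transpose in slot 3 -/

def tau (X : Mat3 n) : Mat3 n :=
  Matrix.of fun p q => X (p.1, p.2.1, q.2.2) (q.1, q.2.1, p.2.2)

lemma tau_mul_A12 (X : Mat3 n) (M : Mat2 n) : tau (X * A12 M) = tau X * A12 M := by
  ext p q
  simp only [tau, Matrix.of_apply, Matrix.mul_apply, Fintype.sum_prod_type, A12,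
    mul_ite, ite_mul, one_mul, mul_one, zero_mul, mul_zero, Finset.sum_ite_eq,
    Finset.sum_ite_eq', Finset.mem_univ, if_true, Finset.sum_ite_irrel, Finset.sum_const_zero]

lemma tau_A12_mul (X : Mat3 n) (M : Mat2 n) : tau (A12 M * X) = A12 M * tau X := by
  ext p q
  simp only [tau, Matrix.of_apply, Matrix.mul_apply, Fintype.sum_prod_type, A12,
    mul_ite, ite_mul, one_mul, mul_one, zero_mul, mul_zero, Finset.sum_ite_eq,
    Finset.sum_ite_eq', Finset.mem_univ, if_true, Finset.sum_ite_irrel, Finset.sum_const_zero]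

lemma tau_13_23 (X Y : Mat2 n) : tau (A13 X * A23 Y) = A23 (t2 Y) * A13 (t2 X) := by
  ext p q
  simp only [tau, Matrix.of_apply, Matrix.mul_apply, Fintype.sum_prod_type, A13, A23, t2,
    mul_ite, ite_mul, one_mul, mul_one, zero_mul, mul_zero, Finset.sum_ite_eq,
    Finset.sum_ite_eq', Finset.mem_univ, if_true, Finset.sum_ite_irrel, Finset.sum_const_zero]
  exact Finset.sum_congr rfl fun x _ => mul_comm _ _

lemma tau_23_13 (X Y : Mat2 n) : tau (A23 Y * A13 X) = A13 (t2 X) * A23 (t2 Y) := by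
  ext p q
  simp only [tau, Matrix.of_apply, Matrix.mul_apply, Fintype.sum_prod_type, A13, A23, t2,
    mul_ite, ite_mul, one_mul, mul_one, zero_mul, mul_zero, Finset.sum_ite_eq,
    Finset.sum_ite_eq', Finset.mem_univ, if_true, Finset.sum_ite_irrel, Finset.sum_const_zero]
  exact Finset.sum_congr rfl fun x _ => mul_comm _ _

/-! ### biinvertibility basics -/

lemma t2_Rtil (R : Mat2 n) : t2 (Rtil R) = (t2 R)⁻¹ := rfl

section inv
variable {R : Mat2 n}

lemma I1mat (h : IsUnit (t2 R).det) : t2 R * t2 (Rtil R) = 1 := by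
  rw [t2_Rtil]; exact Matrix.mul_nonsing_inv _ h

lemma I2mat (h : IsUnit (t2 R).det) : t2 (Rtil R) * t2 R = 1 := by
  rw [t2_Rtil]; exact Matrix.nonsing_inv_mul _ h

lemma t1_mul_t1_Rtil (h : IsUnit (t2 R).det) : t1 R * t1 (Rtil R) = 1 := by
  rw [t1_eq_transpose_t2, t1_eq_transpose_t2, ← Matrix.transpose_mul, I2mat h,
    Matrix.transpose_one]

lemma t1_inv (h : IsUnit (t2 R).det) : (t1 R)⁻¹ = t1 (Rtil R) := by
  exact Matrix.inv_eq_right_inv (t1_mul_t1_Rtil h)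

end inv

lemma t2_flipm (M : Mat2 n) : t2 (flipm M) = flipm (t1 M) := rfl

lemma t1_flipm (M : Mat2 n) : t1 (flipm M) = flipm (t2 M) := rfl

lemma flipm_flipm (M : Mat2 n) : flipm (flipm M) = M := rfl

lemma flipm_mul (X Y : Mat2 n) : flipm (X * Y) = flipm X * flipm Y := by
  rw [← flipm_eq, ← flipm_eq, ← flipm_eq, flip_mul]

lemma flipm_one : flipm (1 : Mat2 n) = 1 := by
  ext p q
  simp [flipm, Matrix.one_apply, Prod.ext_iff, and_comm]

lemma flipm_kron (a b : Mat1 n) : flipm (kron a b) = kron b a := by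
  rw [← flipm_eq, flip_kron]

lemma flipm_inv (X : Mat2 n) (h : IsUnit X.det) : (flipm X)⁻¹ = flipm X⁻¹ := by
  apply Matrix.inv_eq_right_inv
  rw [← flipm_mul, Matrix.mul_nonsing_inv _ h, flipm_one]

lemma Rtil_flipm (R : Mat2 n) (h : IsUnit (t2 R).det) :
    Rtil (flipm R) = flipm (Rtil R) := by
  have hdet1 : IsUnit (t1 R).det := by
    rw [t1_eq_transpose_t2, Matrix.det_transpose]; exact h
  show t2 (t2 (flipm R))⁻¹ = flipm (Rtil R)
  rw [t2_flipm, flipm_inv _ hdet1, t1_inv h, t2_flipm, t1_t1]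

lemma Umat_flipm (R : Mat2 n) (h : IsUnit (t2 R).det) : Umat (flipm R) = Vmat R := by
  ext i j
  show ∑ a, Rtil (flipm R) (a, i) (j, a) = ∑ a, Rtil R (i, a) (a, j)
  rw [Rtil_flipm R h]
  rfl

lemma Vmat_flipm (R : Mat2 n) (h : IsUnit (t2 R).det) : Vmat (flipm R) = Umat R := by
  ext i j
  show ∑ a, Rtil (flipm R) (i, a) (a, j) = ∑ a, Rtil R (a, i) (j, a)
  rw [Rtil_flipm R h]
  rfl

/-! ### conjugated Yang-Baxter relations -/

section ybg
variable {R : Mat2 n}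

lemma YBtau (hq : QYB R) :
    A12 R * (A23 (t2 R) * A13 (t2 R)) = A13 (t2 R) * A23 (t2 R) * A12 R := by
  have h0 : A12 R * A13 R * A23 R = A23 R * A13 R * A12 R := hq
  have e1 : tau (A12 R * A13 R * A23 R) = A12 R * (A23 (t2 R) * A13 (t2 R)) := by
    rw [mul_assoc, tau_A12_mul, tau_13_23]
  have e2 : tau (A23 R * A13 R * A12 R) = A13 (t2 R) * A23 (t2 R) * A12 R := by
    rw [tau_mul_A12, tau_23_13]
  rw [← e1, ← e2, h0]

lemma conj_yb (Rm A B : Mat2 n) (hAB : A * B = 1) (hBA : B * A = 1)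
    (hyb : A12 Rm * (A23 A * A13 A) = A13 A * A23 A * A12 Rm) :
    A12 Rm * (A13 B * A23 B) = A23 B * A13 B * A12 Rm := by
  have hML : (A23 A * A13 A) * (A13 B * A23 B) = 1 := by
    calc (A23 A * A13 A) * (A13 B * A23 B)
        = A23 A * (A13 A * A13 B) * A23 B := by noncomm_ring
      _ = A23 A * A13 (A * B) * A23 B := by rw [A13_mul]
      _ = A23 A * 1 * A23 B := by rw [hAB, A13_one]
      _ = A23 (A * B) := by rw [mul_one, ← A23_mul]
      _ = 1 := by rw [hAB, A23_one]
  have hML' : (A23 B * A13 B) * (A13 A * A23 A) = 1 := by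
    calc (A23 B * A13 B) * (A13 A * A23 A)
        = A23 B * (A13 B * A13 A) * A23 A := by noncomm_ring
      _ = A23 B * A13 (B * A) * A23 A := by rw [A13_mul]
      _ = A23 B * 1 * A23 A := by rw [hBA, A13_one]
      _ = A23 (B * A) := by rw [mul_one, ← A23_mul]
      _ = 1 := by rw [hBA, A23_one]
  calc A12 Rm * (A13 B * A23 B)
      = ((A23 B * A13 B) * (A13 A * A23 A)) * (A12 Rm * (A13 B * A23 B)) := by
        rw [hML', one_mul]
    _ = (A23 B * A13 B) * ((A13 A * A23 A * A12 Rm) * (A13 B * A23 B)) := by noncomm_ring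
    _ = (A23 B * A13 B) * ((A12 Rm * (A23 A * A13 A)) * (A13 B * A23 B)) := by rw [← hyb]
    _ = (A23 B * A13 B) * A12 Rm * ((A23 A * A13 A) * (A13 B * A23 B)) := by noncomm_ring
    _ = A23 B * A13 B * A12 Rm := by rw [hML, mul_one]

lemma YBB (hq : QYB R) (h : IsUnit (t2 R).det) :
    A12 R * (A13 (t2 R)⁻¹ * A23 (t2 R)⁻¹) = A23 (t2 R)⁻¹ * A13 (t2 R)⁻¹ * A12 R :=
  conj_yb R (t2 R) (t2 R)⁻¹ (Matrix.mul_nonsing_inv _ h) (Matrix.nonsing_inv_mul _ h)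
    (YBtau hq)

lemma YBG (hq : QYB R) (h : IsUnit (t2 R).det) :
    A12 R * A23 (Rtil R) * A13 (Rtil R) = A13 (Rtil R) * A23 (Rtil R) * A12 R := by
  have hb := YBB hq h
  have e1 : tau (A12 R * (A13 (t2 R)⁻¹ * A23 (t2 R)⁻¹))
      = A12 R * (A23 (Rtil R) * A13 (Rtil R)) := by
    rw [tau_A12_mul, tau_13_23]
    rfl
  have e2 : tau (A23 (t2 R)⁻¹ * A13 (t2 R)⁻¹ * A12 R)
      = A13 (Rtil R) * A23 (Rtil R) * A12 R := by
    rw [tau_mul_A12, tau_23_13]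
    rfl
  rw [mul_assoc, ← e1, ← e2, hb]

end ybg

/-! ### QYB for flipped matrix -/

lemma QYB_flipm {R : Mat2 n} (hq : QYB R) : QYB (flipm R) := by
  have hOO : (Omega : Mat3 n) * Omega = 1 := Omega_mul_Omega
  have h12 : A12 (flipm R) = Omega * A23 R * Omega := by
    calc A12 (flipm R) = A12 (flipm R) * (Omega * Omega) := by rw [hOO, mul_one]
      _ = Omega * A23 R * Omega := by rw [← mul_assoc, ← Omega_A23]
  have h13 : A13 (flipm R) = Omega * A13 R * Omega := by
    calc A13 (flipm R) = A13 (flipm R) * (Omega * Omega) := by rw [hOO, mul_one]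
      _ = Omega * A13 R * Omega := by rw [← mul_assoc, ← Omega_A13]
  have h23 : A23 (flipm R) = Omega * A12 R * Omega := by
    calc A23 (flipm R) = A23 (flipm R) * (Omega * Omega) := by rw [hOO, mul_one]
      _ = Omega * A12 R * Omega := by rw [← mul_assoc, ← Omega_A12]
  have sandwich : ∀ X Y Z : Mat3 n,
      (Omega * X * Omega) * (Omega * Y * Omega) * (Omega * Z * Omega)
        = Omega * (X * Y * Z) * Omega := by
    intro X Y Z
    calc (Omega * X * Omega) * (Omega * Y * Omega) * (Omega * Z * Omega)
        = Omega * X * (Omega * Omega) * Y * (Omega * Omega) * Z * Omega := by noncomm_ring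
      _ = Omega * X * 1 * Y * 1 * Z * Omega := by rw [hOO]
      _ = Omega * (X * Y * Z) * Omega := by noncomm_ring
  show A12 (flipm R) * A13 (flipm R) * A23 (flipm R)
      = A23 (flipm R) * A13 (flipm R) * A12 (flipm R)
  rw [h12, h13, h23, sandwich, sandwich,
    show A23 R * A13 R * A12 R = A12 R * A13 R * A23 R from hq.symm]

/-! ### det lemmas -/

lemma det_flipm (X : Mat2 n) : (flipm X).det = X.det := by
  rw [← flipm_eq, Matrix.det_mul, Matrix.det_mul]
  have hP : (Pmat n).det * (Pmat n).det = 1 := by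
    rw [← Matrix.det_mul, Pmat_mul_Pmat, Matrix.det_one]
  calc (Pmat n).det * X.det * (Pmat n).det
      = ((Pmat n).det * (Pmat n).det) * X.det := by ring
    _ = X.det := by rw [hP, one_mul]

lemma det_t2_flipm (R : Mat2 n) : (t2 (flipm R)).det = (t2 R).det := by
  rw [t2_flipm, det_flipm, t1_eq_transpose_t2, Matrix.det_transpose]

/-! ### YBF -/

lemma A12P_sq : A12 (Pmat n) * A12 (Pmat n) = 1 := by
  rw [← A12_mul, Pmat_mul_Pmat, A12_one]

lemma conj12_A23 (X : Mat2 n) :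
    A12 (Pmat n) * A23 X * A12 (Pmat n) = A13 X := by
  rw [← swap_13_12P, mul_assoc, A12P_sq, mul_one]

lemma conj12_A13 (X : Mat2 n) :
    A12 (Pmat n) * A13 X * A12 (Pmat n) = A23 X := by
  rw [← swap_23_12P, mul_assoc, A12P_sq, mul_one]

lemma conj12_A12 (X : Mat2 n) :
    A12 (Pmat n) * A12 X * A12 (Pmat n) = A12 (flipm X) := by
  rw [← A12_mul, ← A12_mul, ← flipm_eq]

lemma YBF {R : Mat2 n} (hq : QYB R) (h : IsUnit (t2 R).det) :
    A12 R * A13 (flipm (Rtil R)) * A23 (flipm (Rtil R))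
      = A23 (flipm (Rtil R)) * A13 (flipm (Rtil R)) * A12 R := by
  have hq' : QYB (flipm R) := QYB_flipm hq
  have h' : IsUnit (t2 (flipm R)).det := by rw [det_t2_flipm]; exact h
  have g := YBG hq' h'
  rw [Rtil_flipm R h] at g
  have sandwich : ∀ X Y Z : Mat3 n,
      (A12 (Pmat n) * X * A12 (Pmat n)) * (A12 (Pmat n) * Y * A12 (Pmat n)) *
        (A12 (Pmat n) * Z * A12 (Pmat n))
        = A12 (Pmat n) * (X * Y * Z) * A12 (Pmat n) := by
    intro X Y Z
    calc (A12 (Pmat n) * X * A12 (Pmat n)) * (A12 (Pmat n) * Y * A12 (Pmat n)) *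
        (A12 (Pmat n) * Z * A12 (Pmat n))
        = A12 (Pmat n) * X * (A12 (Pmat n) * A12 (Pmat n)) * Y *
            (A12 (Pmat n) * A12 (Pmat n)) * Z * A12 (Pmat n) := by noncomm_ring
      _ = A12 (Pmat n) * X * 1 * Y * 1 * Z * A12 (Pmat n) := by rw [A12P_sq]
      _ = A12 (Pmat n) * (X * Y * Z) * A12 (Pmat n) := by noncomm_ring
  calc A12 R * A13 (flipm (Rtil R)) * A23 (flipm (Rtil R))
      = (A12 (Pmat n) * A12 (flipm R) * A12 (Pmat n)) *
          (A12 (Pmat n) * A23 (flipm (Rtil R)) * A12 (Pmat n)) *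
          (A12 (Pmat n) * A13 (flipm (Rtil R)) * A12 (Pmat n)) := by
        rw [conj12_A12, conj12_A23, conj12_A13, flipm_flipm]
    _ = A12 (Pmat n) * (A12 (flipm R) * A23 (flipm (Rtil R)) * A13 (flipm (Rtil R))) *
          A12 (Pmat n) := sandwich _ _ _
    _ = A12 (Pmat n) * (A13 (flipm (Rtil R)) * A23 (flipm (Rtil R)) * A12 (flipm R)) *
          A12 (Pmat n) := by rw [g]
    _ = (A12 (Pmat n) * A13 (flipm (Rtil R)) * A12 (Pmat n)) *
          (A12 (Pmat n) * A23 (flipm (Rtil R)) * A12 (Pmat n)) *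
          (A12 (Pmat n) * A12 (flipm R) * A12 (Pmat n)) := (sandwich _ _ _).symm
    _ = A23 (flipm (Rtil R)) * A13 (flipm (Rtil R)) * A12 R := by
        rw [conj12_A12, conj12_A23, conj12_A13, flipm_flipm]

/-! ### sum reordering helpers -/

lemma sum_comm_B {M : Type*} [AddCommMonoid M] (f : Fin n → Fin n → Fin n → Fin n → M) :
    (∑ z, ∑ w, ∑ x, ∑ k, f z w x k) = ∑ k, ∑ w, ∑ z, ∑ x, f z w x k := by
  calc (∑ z, ∑ w, ∑ x, ∑ k, f z w x k)
      = ∑ z, ∑ w, ∑ k, ∑ x, f z w x k :=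
        Finset.sum_congr rfl fun z _ => Finset.sum_congr rfl fun w _ => Finset.sum_comm
    _ = ∑ z, ∑ k, ∑ w, ∑ x, f z w x k := Finset.sum_congr rfl fun z _ => Finset.sum_comm
    _ = ∑ k, ∑ z, ∑ w, ∑ x, f z w x k := Finset.sum_comm
    _ = ∑ k, ∑ w, ∑ z, ∑ x, f z w x k := Finset.sum_congr rfl fun k _ => Finset.sum_comm

lemma sum_comm_D {M : Type*} [AddCommMonoid M] (f : Fin n → Fin n → Fin n → Fin n → M) :
    (∑ k, ∑ u, ∑ y, ∑ z, f k u y z) = ∑ u, ∑ z, ∑ k, ∑ y, f k u y z := by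
  calc (∑ k, ∑ u, ∑ y, ∑ z, f k u y z)
      = ∑ u, ∑ k, ∑ y, ∑ z, f k u y z := Finset.sum_comm
    _ = ∑ u, ∑ k, ∑ z, ∑ y, f k u y z :=
        Finset.sum_congr rfl fun u _ => Finset.sum_congr rfl fun k _ => Finset.sum_comm
    _ = ∑ u, ∑ z, ∑ k, ∑ y, f k u y z := Finset.sum_congr rfl fun u _ => Finset.sum_comm

/-! ### the master lemma MA -/

lemma MA {R : Mat2 n} (hq : QYB R) (h : IsUnit (t2 R).det) :
    R * kron (Umat R) 1 * Rtil R = kron (Umat R) 1 := by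
  have hY := YBF hq h
  rw [mul3_121323, mul3_231312] at hY
  have hYe := Matrix.ext_iff.mpr hY
  ext ⟨a, b⟩ ⟨c, d⟩
  have hRU : ∀ z w, (R * kron (Umat R) 1) (a, b) (z, w)
      = ∑ x, ∑ k, R (a, b) (x, w) * Rtil R (k, x) (z, k) := by
    intro z w
    rw [mul_kron_apply]
    simp only [Matrix.one_apply, mul_ite, mul_one, mul_zero, Finset.sum_ite_eq,
      Finset.sum_ite_eq', Finset.mem_univ, if_true, Finset.sum_ite_irrel,
      Finset.sum_const_zero]
    simp only [Umat, Matrix.of_apply, Finset.mul_sum]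
  show (R * kron (Umat R) 1 * Rtil R) (a, b) (c, d) = kron (Umat R) 1 (a, b) (c, d)
  rw [Matrix.mul_apply, Fintype.sum_prod_type]
  simp only [hRU, Finset.sum_mul]
  -- LHS: ∑ z, ∑ w, ∑ x, ∑ k, R (a,b) (x,w) * T (k,x) (z,k) * T (z,w) (c,d)
  rw [sum_comm_B (fun z w x k => R (a, b) (x, w) * Rtil R (k, x) (z, k) * Rtil R (z, w) (c, d))]
  -- now ∑ k, ∑ w, ∑ z, ∑ x, ...
  have hstep : ∀ k, (∑ w, ∑ z, ∑ x,
        R (a, b) (x, w) * Rtil R (k, x) (z, k) * Rtil R (z, w) (c, d))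
      = ∑ u, ∑ y, ∑ z, Rtil R (k, b) (z, y) * Rtil R (z, a) (c, u) * R (u, y) (k, d) := by
    intro k
    have h0 := hYe (a, b, k) (k, d, c)
    simp only [Matrix.of_apply, flipm] at h0
    exact h0
  simp only [hstep]
  rw [sum_comm_D (fun k u y z => Rtil R (k, b) (z, y) * Rtil R (z, a) (c, u) * R (u, y) (k, d))]
  -- now ∑ u, ∑ z, ∑ k, ∑ y, ...
  have hI1 : ∀ u z, (∑ k, ∑ y, R (u, y) (k, d) * Rtil R (k, b) (z, y))
      = if u = z ∧ d = b then 1 else 0 := by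
    intro u z
    have h1 := Matrix.ext_iff.mpr (I1mat h) (u, d) (z, b)
    rw [Matrix.mul_apply, Fintype.sum_prod_type] at h1
    simpa [t2, Matrix.one_apply, Prod.ext_iff] using h1
  have hfact : ∀ u z, (∑ k, ∑ y,
        Rtil R (k, b) (z, y) * Rtil R (z, a) (c, u) * R (u, y) (k, d))
      = Rtil R (z, a) (c, u) * (if u = z ∧ d = b then 1 else 0) := by
    intro u z
    rw [← hI1 u z, Finset.mul_sum]
    apply Finset.sum_congr rfl; intro k _
    rw [Finset.mul_sum]
    apply Finset.sum_congr rfl; intro y _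
    ring
  simp only [hfact]
  simp only [mul_ite, mul_one, mul_zero, ite_and, Finset.sum_ite_eq, Finset.sum_ite_eq',
    Finset.mem_univ, if_true, Finset.sum_ite_irrel, Finset.sum_const_zero]
  -- should now be: (if d = b then ∑ u, T (u,a) (c,u) else 0) = kron U 1 (a,b) (c,d)
  simp only [kron, Matrix.of_apply, Umat, Matrix.one_apply]
  by_cases hbd : b = d
  · subst hbd; simp
  · simp [hbd, Ne.symm hbd]

/-! ### MB via flip -/

lemma MB {R : Mat2 n} (hq : QYB R) (h : IsUnit (t2 R).det) :
    R * kron 1 (Vmat R) * Rtil R = kron 1 (Vmat R) := by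
  have hq' : QYB (flipm R) := QYB_flipm hq
  have h' : IsUnit (t2 (flipm R)).det := by rw [det_t2_flipm]; exact h
  have g := MA hq' h'
  rw [Umat_flipm R h, Rtil_flipm R h] at g
  have g2 := congrArg flipm g
  rw [flipm_mul, flipm_mul, flipm_flipm, flipm_flipm, flipm_kron] at g2
  exact g2

/-! ### trace lemma: Tr2(PR(1⊗U)) = 1 -/

lemma sum_comm_E {M : Type*} [AddCommMonoid M] (f : Fin n → Fin n → Fin n → M) :
    (∑ d, ∑ y, ∑ k, f d y k) = ∑ k, ∑ d, ∑ y, f d y k := by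
  calc (∑ d, ∑ y, ∑ k, f d y k)
      = ∑ d, ∑ k, ∑ y, f d y k := Finset.sum_congr rfl fun d _ => Finset.sum_comm
    _ = ∑ k, ∑ d, ∑ y, f d y k := Finset.sum_comm

lemma Elemma {R : Mat2 n} (h : IsUnit (t2 R).det) :
    Tr2 (Pmat n * R * kron 1 (Umat R)) = 1 := by
  ext a c
  show ∑ d, (Pmat n * R * kron 1 (Umat R)) (a, d) (c, d) = (1 : Mat1 n) a c
  have hent : ∀ d, (Pmat n * R * kron 1 (Umat R)) (a, d) (c, d)
      = ∑ y, ∑ k, R (d, a) (c, y) * Rtil R (k, y) (d, k) := by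
    intro d
    rw [mul_kron_apply]
    simp only [Matrix.one_apply, ite_mul, one_mul, zero_mul, mul_ite, mul_zero,
      Finset.sum_ite_eq, Finset.sum_ite_eq', Finset.mem_univ, if_true,
      Finset.sum_ite_irrel, Finset.sum_const_zero]
    simp only [Pmat_mul_apply, Umat, Matrix.of_apply, Finset.mul_sum]
  simp only [hent]
  rw [sum_comm_E (fun d y k => R (d, a) (c, y) * Rtil R (k, y) (d, k))]
  have hI2 : ∀ k, (∑ d, ∑ y, R (d, a) (c, y) * Rtil R (k, y) (d, k))
      = (1 : Mat2 n) (k, k) (c, a) := by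
    intro k
    have h1 := Matrix.ext_iff.mpr (I2mat h) (k, k) (c, a)
    rw [Matrix.mul_apply, Fintype.sum_prod_type] at h1
    rw [← h1]
    simp only [t2, Matrix.of_apply]
    apply Finset.sum_congr rfl; intro d _
    apply Finset.sum_congr rfl; intro y _
    ring
  simp only [hI2]
  simp only [Matrix.one_apply, Prod.ext_iff, ite_and, Finset.sum_ite_eq,
    Finset.sum_ite_eq', Finset.mem_univ, if_true]
  by_cases hac : a = c
  · subst hac; simp
  · simp [hac, Ne.symm hac]

/-! ### kron smul -/

lemma kron_smul_left (c : ℂ) (a b : Mat1 n) : kron (c • a) b = c • kron a b := by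
  ext p q
  simp [kron, mul_assoc]

lemma kron_smul_right (c : ℂ) (a b : Mat1 n) : kron a (c • b) = c • kron a b := by
  ext p q
  simp only [kron, Matrix.of_apply, Matrix.smul_apply, smul_eq_mul]
  ring

/-! ### braid relation for P*R -/

lemma braidPR {R : Mat2 n} (hq : QYB R) :
    A12 (Pmat n * R) * A23 (Pmat n * R) * A12 (Pmat n * R)
      = A23 (Pmat n * R) * A12 (Pmat n * R) * A23 (Pmat n * R) := by
  have hq' : A23 R * A13 R * A12 R = A12 R * A13 R * A23 R := (hq : _ = _).symm
  have L : A12 (Pmat n * R) * A23 (Pmat n * R) * A12 (Pmat n * R)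
      = (A12 (Pmat n) * A23 (Pmat n) * A12 (Pmat n)) * (A23 R * A13 R * A12 R) := by
    calc A12 (Pmat n * R) * A23 (Pmat n * R) * A12 (Pmat n * R)
        = A12 (Pmat n) * (A12 R * A23 (Pmat n)) * A23 R * A12 (Pmat n) * A12 R := by
          rw [A12_mul, A23_mul]; noncomm_ring
      _ = A12 (Pmat n) * (A23 (Pmat n) * A13 R) * A23 R * A12 (Pmat n) * A12 R := by
          rw [swap_12_23P]
      _ = A12 (Pmat n) * A23 (Pmat n) * A13 R * (A23 R * A12 (Pmat n)) * A12 R := by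
          noncomm_ring
      _ = A12 (Pmat n) * A23 (Pmat n) * A13 R * (A12 (Pmat n) * A13 R) * A12 R := by
          rw [swap_23_12P]
      _ = A12 (Pmat n) * A23 (Pmat n) * (A13 R * A12 (Pmat n)) * (A13 R * A12 R) := by
          noncomm_ring
      _ = A12 (Pmat n) * A23 (Pmat n) * (A12 (Pmat n) * A23 R) * (A13 R * A12 R) := by
          rw [swap_13_12P]
      _ = (A12 (Pmat n) * A23 (Pmat n) * A12 (Pmat n)) * (A23 R * A13 R * A12 R) := by
          noncomm_ring
  have Rr : A23 (Pmat n * R) * A12 (Pmat n * R) * A23 (Pmat n * R)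
      = (A23 (Pmat n) * A12 (Pmat n) * A23 (Pmat n)) * (A12 R * A13 R * A23 R) := by
    calc A23 (Pmat n * R) * A12 (Pmat n * R) * A23 (Pmat n * R)
        = A23 (Pmat n) * (A23 R * A12 (Pmat n)) * A12 R * A23 (Pmat n) * A23 R := by
          rw [A12_mul, A23_mul]; noncomm_ring
      _ = A23 (Pmat n) * (A12 (Pmat n) * A13 R) * A12 R * A23 (Pmat n) * A23 R := by
          rw [swap_23_12P]
      _ = A23 (Pmat n) * A12 (Pmat n) * A13 R * (A12 R * A23 (Pmat n)) * A23 R := by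
          noncomm_ring
      _ = A23 (Pmat n) * A12 (Pmat n) * A13 R * (A23 (Pmat n) * A13 R) * A23 R := by
          rw [swap_12_23P]
      _ = A23 (Pmat n) * A12 (Pmat n) * (A13 R * A23 (Pmat n)) * (A13 R * A23 R) := by
          noncomm_ring
      _ = A23 (Pmat n) * A12 (Pmat n) * (A23 (Pmat n) * A12 R) * (A13 R * A23 R) := by
          rw [swap_13_23P]
      _ = (A23 (Pmat n) * A12 (Pmat n) * A23 (Pmat n)) * (A12 R * A13 R * A23 R) := by
          noncomm_ring
  rw [L, Rr, swap_braidP, hq']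

/-! ### main enhancement lemma for P*R -/

lemma UV_eq {R : Mat2 n} (α : ℂ) (hα : α ≠ 0)
    (hVU : Vmat R * Umat R = (α ^ 2) • (1 : Mat1 n)) :
    Umat R * Vmat R = (α ^ 2) • (1 : Mat1 n) := by
  have hα2 : (α ^ 2 : ℂ) ≠ 0 := pow_ne_zero _ hα
  have hdetVU : (Vmat R).det * (Umat R).det = (α ^ 2) ^ (Fintype.card (Fin n)) := by
    rw [← Matrix.det_mul, hVU, Matrix.det_smul, Matrix.det_one, mul_one]
  have hUdet : IsUnit (Umat R).det := isUnit_iff_ne_zero.mpr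
    (right_ne_zero_of_mul (a := (Vmat R).det) (by rw [hdetVU]; exact pow_ne_zero _ hα2))
  have hUUi : Umat R * (Umat R)⁻¹ = 1 := Matrix.mul_nonsing_inv _ hUdet
  have hV : Vmat R = (α ^ 2) • (Umat R)⁻¹ := by
    calc Vmat R = Vmat R * (Umat R * (Umat R)⁻¹) := by rw [hUUi, mul_one]
      _ = (Vmat R * Umat R) * (Umat R)⁻¹ := by rw [mul_assoc]
      _ = ((α ^ 2) • (1 : Mat1 n)) * (Umat R)⁻¹ := by rw [hVU]
      _ = (α ^ 2) • (Umat R)⁻¹ := by rw [Matrix.smul_mul, one_mul]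
  rw [hV, Matrix.mul_smul, hUUi]

lemma enhancePR (R : Mat2 n) (hq : QYB R) (hbi : Biinv R) (α : ℂ) (hα : α ≠ 0)
    (hVU : Vmat R * Umat R = (α ^ 2) • (1 : Mat1 n)) :
    IsEnhanced2 (α • (Pmat n * R)) (α⁻¹ • Umat R) := by
  obtain ⟨hRu, h2u⟩ := hbi
  have hRdet : IsUnit R.det := (Matrix.isUnit_iff_isUnit_det R).mp hRu
  have h2det : IsUnit (t2 R).det := (Matrix.isUnit_iff_isUnit_det _).mp h2u
  have hα2 : (α ^ 2 : ℂ) ≠ 0 := pow_ne_zero _ hα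
  have hαi : (α⁻¹ : ℂ) ≠ 0 := inv_ne_zero hα
  have hUV : Umat R * Vmat R = (α ^ 2) • (1 : Mat1 n) := UV_eq α hα hVU
  have hdetVU : (Vmat R).det * (Umat R).det = (α ^ 2) ^ (Fintype.card (Fin n)) := by
    rw [← Matrix.det_mul, hVU, Matrix.det_smul, Matrix.det_one, mul_one]
  have hUdet : IsUnit (Umat R).det := isUnit_iff_ne_zero.mpr
    (right_ne_zero_of_mul (a := (Vmat R).det) (by rw [hdetVU]; exact pow_ne_zero _ hα2))
  have hVdet : IsUnit (Vmat R).det := isUnit_iff_ne_zero.mpr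
    (left_ne_zero_of_mul (b := (Umat R).det) (by rw [hdetVU]; exact pow_ne_zero _ hα2))
  have hUUi : Umat R * (Umat R)⁻¹ = 1 := Matrix.mul_nonsing_inv _ hUdet
  have hUiU : (Umat R)⁻¹ * Umat R = 1 := Matrix.nonsing_inv_mul _ hUdet
  have hVVi : Vmat R * (Vmat R)⁻¹ = 1 := Matrix.mul_nonsing_inv _ hVdet
  have hViV : (Vmat R)⁻¹ * Vmat R = 1 := Matrix.nonsing_inv_mul _ hVdet
  have hRRi : R * R⁻¹ = 1 := Matrix.mul_nonsing_inv _ hRdet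
  have hRiR : R⁻¹ * R = 1 := Matrix.nonsing_inv_mul _ hRdet
  have hVinv : (Vmat R)⁻¹ = (α ^ 2)⁻¹ • Umat R := by
    apply Matrix.inv_eq_right_inv
    rw [Matrix.mul_smul, hVU, smul_smul, inv_mul_cancel₀ hα2, one_smul]
  have hUinv : (Umat R)⁻¹ = (α ^ 2)⁻¹ • Vmat R := by
    apply Matrix.inv_eq_right_inv
    rw [Matrix.mul_smul, hUV, smul_smul, inv_mul_cancel₀ hα2, one_smul]
  have hMA : R * kron (Umat R) 1 * Rtil R = kron (Umat R) 1 := MA hq h2det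
  have hMB : R * kron 1 (Vmat R) * Rtil R = kron 1 (Vmat R) := MB hq h2det
  have hQ1 : R⁻¹ = kron (Umat R) 1 * Rtil R * kron (Umat R)⁻¹ 1 := by
    apply Matrix.inv_eq_right_inv
    calc R * (kron (Umat R) 1 * Rtil R * kron (Umat R)⁻¹ 1)
        = (R * kron (Umat R) 1 * Rtil R) * kron (Umat R)⁻¹ 1 := by noncomm_ring
      _ = kron (Umat R) 1 * kron (Umat R)⁻¹ 1 := by rw [hMA]
      _ = 1 := by rw [kron_mul_kron, hUUi, one_mul, kron_one_one]
  have hQ2 : R⁻¹ = kron 1 (Vmat R) * Rtil R * kron 1 (Vmat R)⁻¹ := by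
    apply Matrix.inv_eq_right_inv
    calc R * (kron 1 (Vmat R) * Rtil R * kron 1 (Vmat R)⁻¹)
        = (R * kron 1 (Vmat R) * Rtil R) * kron 1 (Vmat R)⁻¹ := by noncomm_ring
      _ = kron 1 (Vmat R) * kron 1 (Vmat R)⁻¹ := by rw [hMB]
      _ = 1 := by rw [kron_mul_kron, hVVi, one_mul, kron_one_one]
  -- commutation of R with U ⊗ U
  have hcomm_inv : R⁻¹ * kron (Umat R) (Vmat R)⁻¹ = kron (Umat R) (Vmat R)⁻¹ * R⁻¹ := by
    calc R⁻¹ * kron (Umat R) (Vmat R)⁻¹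
        = kron (Umat R) 1 * Rtil R * (kron (Umat R)⁻¹ 1 * kron (Umat R) (Vmat R)⁻¹) := by
          rw [hQ1]; noncomm_ring
      _ = kron (Umat R) 1 * Rtil R * kron 1 (Vmat R)⁻¹ := by
          rw [kron_mul_kron, hUiU, one_mul]
      _ = (kron (Umat R) (Vmat R)⁻¹ * kron 1 (Vmat R)) * Rtil R * kron 1 (Vmat R)⁻¹ := by
          rw [kron_mul_kron, mul_one, hViV]
      _ = kron (Umat R) (Vmat R)⁻¹ * (kron 1 (Vmat R) * Rtil R * kron 1 (Vmat R)⁻¹) := by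
          noncomm_ring
      _ = kron (Umat R) (Vmat R)⁻¹ * R⁻¹ := by rw [← hQ2]
  have hcommR : R * kron (Umat R) (Vmat R)⁻¹ = kron (Umat R) (Vmat R)⁻¹ * R := by
    calc R * kron (Umat R) (Vmat R)⁻¹
        = R * kron (Umat R) (Vmat R)⁻¹ * (R⁻¹ * R) := by rw [hRiR, mul_one]
      _ = R * (R⁻¹ * kron (Umat R) (Vmat R)⁻¹) * R := by rw [hcomm_inv]; noncomm_ring
      _ = (R * R⁻¹) * kron (Umat R) (Vmat R)⁻¹ * R := by noncomm_ring
      _ = kron (Umat R) (Vmat R)⁻¹ * R := by rw [hRRi, one_mul]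
  have hcommUU : R * kron (Umat R) (Umat R) = kron (Umat R) (Umat R) * R := by
    have e : kron (Umat R) (Vmat R)⁻¹ = (α ^ 2)⁻¹ • kron (Umat R) (Umat R) := by
      rw [hVinv, kron_smul_right]
    have h' := hcommR
    rw [e, Matrix.mul_smul, Matrix.smul_mul] at h'
    exact smul_right_injective _ (inv_ne_zero hα2) h'
  -- inverses of S and μ
  have hSinv : (α • (Pmat n * R))⁻¹ = α⁻¹ • (R⁻¹ * Pmat n) := by
    apply Matrix.inv_eq_right_inv
    rw [Matrix.smul_mul, Matrix.mul_smul, smul_smul, mul_inv_cancel₀ hα, one_smul]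
    calc Pmat n * R * (R⁻¹ * Pmat n) = Pmat n * (R * R⁻¹) * Pmat n := by noncomm_ring
      _ = 1 := by rw [hRRi, mul_one, Pmat_mul_Pmat]
  have hSinv' : (α⁻¹ • (R⁻¹ * Pmat n)) * (α • (Pmat n * R)) = 1 := by
    rw [Matrix.smul_mul, Matrix.mul_smul, smul_smul, inv_mul_cancel₀ hα, one_smul]
    calc R⁻¹ * Pmat n * (Pmat n * R) = R⁻¹ * (Pmat n * Pmat n) * R := by noncomm_ring
      _ = 1 := by rw [Pmat_mul_Pmat, mul_one, hRiR]
  have hSS' : (α • (Pmat n * R)) * (α⁻¹ • (R⁻¹ * Pmat n)) = 1 := by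
    rw [Matrix.smul_mul, Matrix.mul_smul, smul_smul, mul_inv_cancel₀ hα, one_smul]
    calc Pmat n * R * (R⁻¹ * Pmat n) = Pmat n * (R * R⁻¹) * Pmat n := by noncomm_ring
      _ = 1 := by rw [hRRi, mul_one, Pmat_mul_Pmat]
  have hμinv : (α⁻¹ • Umat R)⁻¹ = α • (Umat R)⁻¹ := by
    apply Matrix.inv_eq_right_inv
    rw [Matrix.smul_mul, Matrix.mul_smul, smul_smul, inv_mul_cancel₀ hα, one_smul, hUUi]
  have hμμ' : (α⁻¹ • Umat R) * (α • (Umat R)⁻¹) = 1 := by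
    rw [Matrix.smul_mul, Matrix.mul_smul, smul_smul, inv_mul_cancel₀ hα, one_smul, hUUi]
  have hμ'μ : (α • (Umat R)⁻¹) * (α⁻¹ • Umat R) = 1 := by
    rw [Matrix.smul_mul, Matrix.mul_smul, smul_smul, mul_inv_cancel₀ hα, one_smul, hUiU]
  refine ⟨⟨⟨_, α⁻¹ • (R⁻¹ * Pmat n), hSS', hSinv'⟩, rfl⟩,
    ⟨⟨_, α • (Umat R)⁻¹, hμμ', hμ'μ⟩, rfl⟩, ?_, ?_, ?_, ?_, ?_, ?_⟩
  · -- Braid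
    show A12 (α • (Pmat n * R)) * A23 (α • (Pmat n * R)) * A12 (α • (Pmat n * R))
        = A23 (α • (Pmat n * R)) * A12 (α • (Pmat n * R)) * A23 (α • (Pmat n * R))
    simp only [A12_smul, A23_smul, Matrix.smul_mul, Matrix.mul_smul, smul_smul]
    rw [braidPR hq]
  · -- commutation with kron μ μ
    have hkμμ : kron (α⁻¹ • Umat R) (α⁻¹ • Umat R)
        = (α⁻¹ * α⁻¹) • kron (Umat R) (Umat R) := by
      rw [kron_smul_left, kron_smul_right, smul_smul]
    rw [hkμμ]
    simp only [Matrix.smul_mul, Matrix.mul_smul, smul_smul]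
    have hPRK : Pmat n * R * kron (Umat R) (Umat R)
        = kron (Umat R) (Umat R) * (Pmat n * R) := by
      calc Pmat n * R * kron (Umat R) (Umat R)
          = Pmat n * (kron (Umat R) (Umat R) * R) := by rw [mul_assoc, hcommUU]
        _ = (Pmat n * kron (Umat R) (Umat R)) * R := by noncomm_ring
        _ = kron (Umat R) (Umat R) * (Pmat n * R) := by rw [Pmat_mul_kron_same]; noncomm_ring
    rw [hPRK]
    congr 1
    ring
  · -- Tr2 (S * kron 1 μ) = 1
    rw [kron_smul_right]
    simp only [Matrix.smul_mul, Matrix.mul_smul, smul_smul]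
    rw [inv_mul_cancel₀ hα, one_smul]
    exact Elemma h2det
  · -- Tr2 (S⁻¹ * kron 1 μ) = 1
    rw [hSinv, kron_smul_right]
    simp only [Matrix.smul_mul, Matrix.mul_smul, smul_smul]
    have hcore : R⁻¹ * Pmat n * kron 1 (Umat R) = kron (Umat R) 1 * (Rtil R * Pmat n) := by
      calc R⁻¹ * Pmat n * kron 1 (Umat R)
          = kron (Umat R) 1 * Rtil R * (kron (Umat R)⁻¹ 1 * Pmat n) * kron 1 (Umat R) := by
            rw [hQ1]; noncomm_ring
        _ = kron (Umat R) 1 * Rtil R * (Pmat n * kron 1 (Umat R)⁻¹) * kron 1 (Umat R) := by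
            rw [kron_one_mul_Pmat]
        _ = kron (Umat R) 1 * (Rtil R * Pmat n) * (kron 1 (Umat R)⁻¹ * kron 1 (Umat R)) := by
            noncomm_ring
        _ = kron (Umat R) 1 * (Rtil R * Pmat n) * 1 := by
            rw [kron_mul_kron, hUiU, one_mul, kron_one_one]
        _ = kron (Umat R) 1 * (Rtil R * Pmat n) := by rw [mul_one]
    rw [hcore, Tr2_smul, Tr2_kron_one_mul]
    have hTrTP : Tr2 (Rtil R * Pmat n) = Vmat R := by
      rw [Tr2_mul_Pmat]; rfl
    rw [hTrTP, hUV, smul_smul]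
    have : α⁻¹ * α⁻¹ * α ^ 2 = 1 := by field_simp
    rw [this, one_smul]
  · -- first t1 condition
    rw [hSinv, hμinv, kron_smul_right, kron_smul_right]
    have e1 : Pmat n * (α⁻¹ • (R⁻¹ * Pmat n)) = α⁻¹ • (Pmat n * R⁻¹ * Pmat n) := by
      rw [Matrix.mul_smul]; noncomm_ring
    have e2 : (α • (Pmat n * R)) * Pmat n = α • (Pmat n * R * Pmat n) := by
      rw [Matrix.smul_mul]
    rw [e1, e2, t1_smul, t1_smul, t1_flip, t1_flip]
    simp only [Matrix.smul_mul, Matrix.mul_smul, smul_smul]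
    rw [show (α * (α * (α⁻¹ * α⁻¹))) = 1 by field_simp, one_smul]
    have hH3 : t2 R⁻¹ * kron (Umat R) 1 * t2 R = kron (Umat R) 1 := by
      have ht2Q : t2 R⁻¹ = kron (Umat R) 1 * (t2 R)⁻¹ * kron (Umat R)⁻¹ 1 := by
        rw [hQ1, t2_mul_kron_one, t2_kron_one_mul, t2_Rtil]
      calc t2 R⁻¹ * kron (Umat R) 1 * t2 R
          = kron (Umat R) 1 * (t2 R)⁻¹ * (kron (Umat R)⁻¹ 1 * kron (Umat R) 1) * t2 R := by
            rw [ht2Q]; noncomm_ring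
        _ = kron (Umat R) 1 * ((t2 R)⁻¹ * t2 R) := by
            rw [kron_mul_kron, hUiU, one_mul, kron_one_one]; noncomm_ring
        _ = kron (Umat R) 1 := by rw [Matrix.nonsing_inv_mul _ h2det, mul_one]
    calc Pmat n * t2 R⁻¹ * Pmat n * kron 1 (Umat R) * (Pmat n * t2 R * Pmat n) *
          kron 1 (Umat R)⁻¹
        = Pmat n * t2 R⁻¹ * (Pmat n * kron 1 (Umat R) * Pmat n) * t2 R *
            (Pmat n * kron 1 (Umat R)⁻¹) := by noncomm_ring
      _ = Pmat n * t2 R⁻¹ * kron (Umat R) 1 * t2 R * (Pmat n * kron 1 (Umat R)⁻¹) := by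
          rw [flip_kron]
      _ = Pmat n * (t2 R⁻¹ * kron (Umat R) 1 * t2 R) * (Pmat n * kron 1 (Umat R)⁻¹) := by
          noncomm_ring
      _ = Pmat n * kron (Umat R) 1 * (Pmat n * kron 1 (Umat R)⁻¹) := by rw [hH3]
      _ = (kron 1 (Umat R) * Pmat n) * (Pmat n * kron 1 (Umat R)⁻¹) := by
          rw [kron_one_mul_Pmat']
      _ = kron 1 (Umat R) * (Pmat n * Pmat n) * kron 1 (Umat R)⁻¹ := by noncomm_ring
      _ = kron 1 (Umat R) * kron 1 (Umat R)⁻¹ := by rw [Pmat_mul_Pmat, mul_one]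
      _ = 1 := by rw [kron_mul_kron, hUUi, one_mul, kron_one_one]
  · -- second t1 condition
    rw [hSinv, hμinv, kron_smul_right, kron_smul_right]
    have e1 : Pmat n * (α • (Pmat n * R)) = α • R := by
      rw [Matrix.mul_smul, ← mul_assoc, Pmat_mul_Pmat, one_mul]
    have e2 : (α⁻¹ • (R⁻¹ * Pmat n)) * Pmat n = α⁻¹ • R⁻¹ := by
      rw [Matrix.smul_mul, mul_assoc, Pmat_mul_Pmat, mul_one]
    rw [e1, e2, t1_smul, t1_smul]
    simp only [Matrix.smul_mul, Matrix.mul_smul, smul_smul]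
    rw [show (α * (α⁻¹ * (α⁻¹ * α))) = 1 by field_simp, one_smul]
    have ht1Q : t1 R⁻¹ = kron 1 (Vmat R) * t1 (Rtil R) * kron 1 (Vmat R)⁻¹ := by
      rw [hQ2, t1_mul_kron_one, t1_kron_one_mul]
    have hViUi : (Vmat R)⁻¹ * (Umat R)⁻¹ = (α ^ 2)⁻¹ • (1 : Mat1 n) := by
      rw [hVinv, hUinv, Matrix.smul_mul, Matrix.mul_smul, hUV, smul_smul, smul_smul]
      congr 1
      field_simp
    calc t1 R * kron 1 (Umat R) * t1 R⁻¹ * kron 1 (Umat R)⁻¹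
        = t1 R * (kron 1 (Umat R) * kron 1 (Vmat R)) * t1 (Rtil R) *
            (kron 1 (Vmat R)⁻¹ * kron 1 (Umat R)⁻¹) := by rw [ht1Q]; noncomm_ring
      _ = t1 R * kron 1 (Umat R * Vmat R) * t1 (Rtil R) *
            kron 1 ((Vmat R)⁻¹ * (Umat R)⁻¹) := by
          simp only [kron_mul_kron, one_mul]
      _ = t1 R * ((α ^ 2) • (1 : Mat2 n)) * t1 (Rtil R) *
            ((α ^ 2)⁻¹ • (1 : Mat2 n)) := by
          rw [hUV, hViUi, kron_smul_right, kron_smul_right, kron_one_one]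
      _ = ((α ^ 2) * (α ^ 2)⁻¹) • (t1 R * t1 (Rtil R)) := by
          simp only [Matrix.smul_mul, Matrix.mul_smul, smul_smul, mul_one]
          congr 1
          ring
      _ = 1 := by rw [mul_inv_cancel₀ hα2, one_smul, t1_mul_t1_Rtil h2det]

theorem enhancement_sufficient_scaled (n : ℕ) (hn : 1 ≤ n) (R : Mat2 n)
    (hQYB : QYB R) (hbi : Biinv R) (α : ℂ) (hα : α ≠ 0)
    (hVU : Vmat R * Umat R = (α ^ 2) • (1 : Mat1 n)) :
    IsEnhanced2 (α • (Pmat n * R)) (α⁻¹ • Umat R) ∧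
    IsEnhanced2 (α • (R * Pmat n)) (α⁻¹ • Vmat R) := by
  have h2det : IsUnit (t2 R).det := (Matrix.isUnit_iff_isUnit_det _).mp hbi.2
  constructor
  · exact enhancePR R hQYB hbi α hα hVU
  · have hPu : IsUnit (Pmat n) := ⟨⟨Pmat n, Pmat n, Pmat_mul_Pmat, Pmat_mul_Pmat⟩, rfl⟩
    have hfu : IsUnit (flipm R) := by
      rw [← flipm_eq]
      exact (hPu.mul hbi.1).mul hPu
    have hf2u : IsUnit (t2 (flipm R)) := by
      rw [Matrix.isUnit_iff_isUnit_det, det_t2_flipm]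
      exact h2det
    have hbi' : Biinv (flipm R) := ⟨hfu, hf2u⟩
    have hVU' : Vmat (flipm R) * Umat (flipm R) = (α ^ 2) • (1 : Mat1 n) := by
      rw [Vmat_flipm R h2det, Umat_flipm R h2det]
      exact UV_eq α hα hVU
    have key := enhancePR (flipm R) (QYB_flipm hQYB) hbi' α hα hVU'
    have hPf : Pmat n * flipm R = R * Pmat n := by
      rw [← flipm_eq]
      calc Pmat n * (Pmat n * R * Pmat n)
          = (Pmat n * Pmat n) * (R * Pmat n) := by noncomm_ring
        _ = R * Pmat n := by rw [Pmat_mul_Pmat, one_mul]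
    rw [hPf, Umat_flipm R h2det] at key
    exact key

end

end Enhance
end

section
/- Let S be an invertible n²×n² complex matrix, μ an invertible n×n complex matrix, and α, β nonzero complex numbers. Then Tr₂(S^{ε}(μ⊗μ)) = α^{ε}β μ holds for ε ∈ {+1, −1} if and only if Tr₂(S^{ε}(I⊗μ)) = α^{ε}β I holds for ε ∈ {+1, −1}. -/
open scoped BigOperators

namespace Enhance

noncomputable section

lemma tr2_mul_kron {n : ℕ} (A : Mat2 n) (μ ν : Mat1 n) :
    Tr2 (A * kron μ ν) = Tr2 (A * kron 1 ν) * μ := by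
  ext a c
  simp only [Tr2, kron, Matrix.mul_apply, Matrix.of_apply, Matrix.one_apply,
    Fintype.sum_prod_type, Finset.sum_mul, Finset.mul_sum, mul_ite, mul_one, mul_zero,
    ite_mul, zero_mul, one_mul]
  rw [Finset.sum_comm]
  refine Finset.sum_congr rfl fun d _ => Finset.sum_congr rfl fun x _ => ?_
  rw [Finset.sum_comm]
  simp only [Finset.sum_ite_eq', Finset.mem_univ, if_true]
  exact Finset.sum_congr rfl fun y _ => by ring

lemma cancel_right {n : ℕ} (X μ : Mat1 n) (hμ : IsUnit μ) (k : ℂ) :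
    X * μ = k • μ ↔ X = k • (1 : Mat1 n) := by
  constructor
  · intro h
    have hd : IsUnit μ.det := (Matrix.isUnit_iff_isUnit_det μ).mp hμ
    have := congrArg (· * μ⁻¹) h
    simpa [Matrix.mul_assoc, Matrix.mul_nonsing_inv μ hd, Matrix.smul_mul] using this
  · intro h
    simp [h, Matrix.smul_mul]

theorem trace_condition_equiv (n : ℕ) (hn : 1 ≤ n) (S : Mat2 n) (μ : Mat1 n)
    (hS : IsUnit S) (hμ : IsUnit μ) (α β : ℂ) (hα : α ≠ 0) (hβ : β ≠ 0) :
    (Tr2 (S * kron μ μ) = (α * β) • μ ∧ Tr2 (S⁻¹ * kron μ μ) = (α⁻¹ * β) • μ) ↔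
    (Tr2 (S * kron 1 μ) = (α * β) • (1 : Mat1 n) ∧
      Tr2 (S⁻¹ * kron 1 μ) = (α⁻¹ * β) • (1 : Mat1 n)) := by
  rw [tr2_mul_kron S μ μ, tr2_mul_kron S⁻¹ μ μ,
    cancel_right _ μ hμ (α * β), cancel_right _ μ hμ (α⁻¹ * β)]

end

end Enhance
end
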